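/- If a connected μ-uniform graph Γ has an (R,r)-decomposition (R a positive integer, r > 0), then h(Γ) ≥ r²(μ−1) / ((μ^{R+1}−1)(μ+r)² + 2rμ(μ−1)). -/

import Mathlib

open scoped ENNReal

namespace TreePaper

variable {V ι : Type*}

/-- The (outer) vertex boundary `∂A = {w : d(w,A) = 1}` of a set of vertices. -/
def vboundary (G : SimpleGraph V) (A : Set V) : Set V :=
  {w | w ∉ A ∧ ∃ a ∈ A, G.Adj w a}

/-- The ratio `|∂A| / |A|`, valued in `ℝ≥0∞`. -/
noncomputable def eratio (G : SimpleGraph V) (A : Finset V) : ℝ≥0∞ :=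
  ((vboundary G (A : Set V)).encard : ℝ≥0∞) / (A.card : ℝ≥0∞)

/-- The Cheeger isoperimetric constant `h(Γ) = inf_A |∂A|/|A|`. -/
noncomputable def cheeger (G : SimpleGraph V) : ℝ≥0∞ :=
  ⨅ (A : Finset V) (_ : A.Nonempty), eratio G A

/-- `V_s = Γ_s ∩ (∪_{t ∈ S₁} Γ_t)`. -/
def Vs (G : SimpleGraph V) (Γ : ι → G.Subgraph) (S₁ : Set ι) (s : ι) : Set V :=
  (Γ s).verts ∩ ⋃ t ∈ S₁, (Γ t).verts

/-- `W_s = ∪_{v ∈ V_s} B̄_{Γ_s}(v,R)`, closed balls taken in the graph metric of `Γ_s`. -/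
def Ws (G : SimpleGraph V) (Γ : ι → G.Subgraph) (S₁ : Set ι) (R : ℕ) (s : ι) : Set V :=
  {u : V | ∃ hu : u ∈ (Γ s).verts, ∃ w : (Γ s).verts, (w : V) ∈ Vs G Γ S₁ s ∧
    (Γ s).coe.Reachable ⟨u, hu⟩ w ∧ (Γ s).coe.dist ⟨u, hu⟩ w ≤ R}

/-- The subgraph of `Γ_s` induced by `V(Γ_s) ∖ W_s`. -/
def rest (G : SimpleGraph V) (Γ : ι → G.Subgraph) (S₁ : Set ι) (R : ℕ) (s : ι) :
    SimpleGraph {u : (Γ s).verts // (u : V) ∉ Ws G Γ S₁ R s} :=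
  (Γ s).coe.induce {u : (Γ s).verts | (u : V) ∉ Ws G Γ S₁ R s}

/-!
Fix a finite set `A` and let `E` be the set of edges entering `A`, so `|E| ≤ μ |∂A|`.
The pieces `Γ_s` (`s ∈ S₁`) and the components of `Γ_s ∖ W_s` (`s ∈ S₂`) are edge-disjoint
`r`-expanders, and every edge leaving the part of `A` inside a piece enters `A` along an edge of
that piece; hence `r` times the number of vertices of `A` covered by either kind of piece is at
most `|E|`. Every other vertex of `A` lies in some `W_s`, so a walk of length at most `R` joins it
to `∂A` or to `A ∩ ⋃_{t ∈ S₁} Γ_t`, and μ-uniformity bounds the number of such vertices by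
`β (|∂A| + |A ∩ ⋃_{t ∈ S₁} Γ_t|)` with `β = 1 + μ + ⋯ + μ^R`. Adding up,
`r |A| ≤ (2μ + β (r + μ)) |∂A|`, and `μ^(R+1) - 1 = β (μ - 1)` turns `r / (2μ + β (r + μ))`
into an upper bound for the stated constant.
-/

open Set Function

/-- Unlike boundary vertices, inward edges add up over edge-disjoint subgraphs. -/
def inwardEdges (G : SimpleGraph V) (A : Set V) : Set (V × V) :=
  {p | p.1 ∉ A ∧ p.2 ∈ A ∧ G.Adj p.1 p.2}

lemma inwardEdges_mono {G G' : SimpleGraph V} (h : G ≤ G') (A : Set V) :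
    inwardEdges G A ⊆ inwardEdges G' A :=
  fun _ ⟨h₁, h₂, hadj⟩ => ⟨h₁, h₂, h hadj⟩

lemma disjoint_inwardEdges {G G' : SimpleGraph V} (h : Disjoint G G') (A : Set V) :
    Disjoint (inwardEdges G A) (inwardEdges G' A) :=
  Set.disjoint_left.2 fun _ ⟨_, _, hadj⟩ ⟨_, _, hadj'⟩ =>
    SimpleGraph.disjoint_left.1 h _ _ hadj hadj'

lemma vboundary_eq_image_fst_inwardEdges (G : SimpleGraph V) (A : Set V) :
    vboundary G A = Prod.fst '' inwardEdges G A := by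
  ext w
  constructor
  · rintro ⟨hw, a, ha, hadj⟩
    exact ⟨(w, a), ⟨hw, ha, hadj⟩, rfl⟩
  · rintro ⟨⟨w, a⟩, ⟨hw, ha, hadj⟩, rfl⟩
    exact ⟨hw, a, ha, hadj⟩

lemma encard_vboundary_le (G : SimpleGraph V) (A : Set V) :
    (vboundary G A).encard ≤ (inwardEdges G A).encard := by
  rw [vboundary_eq_image_fst_inwardEdges]
  exact encard_image_le _ _

lemma encard_biUnion_le_mul {α β : Type*} {S : Set α} {t : α → Set β} {m : ℕ∞}
    (ht : ∀ a ∈ S, (t a).encard ≤ m) : (⋃ a ∈ S, t a).encard ≤ m * S.encard := by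
  rcases S.finite_or_infinite with hS | hS
  · calc (⋃ a ∈ S, t a).encard = (⋃ a ∈ hS.toFinset, t a).encard := by simp
      _ ≤ ∑ a ∈ hS.toFinset, (t a).encard := Finset.set_encard_biUnion_le _ _
      _ ≤ hS.toFinset.card • m :=
        Finset.sum_le_card_nsmul _ _ _ fun a ha => ht a (by simpa using ha)
      _ = m * S.encard := by rw [hS.encard_eq_coe_toFinset_card, nsmul_eq_mul, mul_comm]
  · rcases eq_or_ne m 0 with rfl | hm
    · simp_all
    · rw [hS.encard_eq, ENat.mul_top hm]
      exact le_top

lemma encard_inwardEdges_le {G : SimpleGraph V} {μ : ℕ}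
    (hμ : ∀ x : V, (G.neighborSet x).encard ≤ μ) (A : Set V) :
    (inwardEdges G A).encard ≤ μ * (vboundary G A).encard := by
  refine (encard_le_encard fun p hp => ?_).trans
    (encard_biUnion_le_mul (t := fun b => {b} ×ˢ G.neighborSet b) fun b _ => ?_)
  · obtain ⟨h₁, h₂, hadj⟩ := hp
    exact mem_biUnion (x := p.1) ⟨h₁, p.2, h₂, hadj⟩ ⟨rfl, hadj⟩
  · simpa [encard_prod] using hμ b

lemma le_cheeger_iff {W : Type*} (H : SimpleGraph W) (c : ℝ≥0∞) :
    c ≤ cheeger H ↔ ∀ A : Finset W, c * A.card ≤ (vboundary H A).encard := by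
  simp only [cheeger, eratio, le_iInf_iff]
  refine ⟨fun h A => ?_, fun h A hA => ?_⟩
  · rcases A.eq_empty_or_nonempty with rfl | hA
    · simp
    · exact (ENNReal.le_div_iff_mul_le (.inl (by simpa using hA.ne_empty)) (.inl (by simp))).1
        (h A hA)
  · exact (ENNReal.le_div_iff_mul_le (.inl (by simpa using hA.ne_empty)) (.inl (by simp))).2
      (h A)

lemma toENNReal_sum {α : Type*} (T : Finset α) (g : α → ℕ∞) :
    ((∑ a ∈ T, g a : ℕ∞) : ℝ≥0∞) = ∑ a ∈ T, (g a : ℝ≥0∞) :=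
  map_sum ENat.toENNRealRingHom g T

lemma image_inwardEdges_preimage_subset {W : Type*} (H : SimpleGraph W) (f : W ↪ V)
    (A : Set V) : Prod.map f f '' inwardEdges H (f ⁻¹' A) ⊆ inwardEdges (H.map f) A := by
  rintro _ ⟨⟨w, y⟩, ⟨hw, hy, hadj⟩, rfl⟩
  exact ⟨hw, hy, SimpleGraph.map_adj_apply.2 hadj⟩

lemma mul_encard_inter_range_le {W : Type*} {H : SimpleGraph W} {f : W ↪ V} {c : ℝ≥0∞}
    (hH : c ≤ cheeger H) (A : Finset V) :
    c * (↑A ∩ range f).encard ≤ (inwardEdges (H.map f) A).encard := by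
  classical
  set S := A.preimage f f.injective.injOn
  have hS : ((A : Set V) ∩ range f) = f '' S := by
    rw [Finset.coe_preimage, image_preimage_eq_inter_range]
  calc c * ((A : Set V) ∩ range f).encard = c * S.card := by
        rw [hS, f.injective.injOn.encard_image, encard_coe_eq_coe_finsetCard, ENat.toENNReal_coe]
    _ ≤ (vboundary H S).encard := (le_cheeger_iff H c).1 hH S
    _ ≤ (Prod.map f f '' inwardEdges H S).encard := by
        rw [(f.injective.prodMap f.injective).injOn.encard_image]
        exact ENat.toENNReal_le.2 (encard_vboundary_le H S)
    _ ≤ (inwardEdges (H.map f) A).encard := by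
        refine ENat.toENNReal_le.2 (encard_le_encard ?_)
        rw [Finset.coe_preimage]
        exact image_inwardEdges_preimage_subset H f A

lemma mul_encard_inter_iUnion_range_le {κ : Type*} {W : κ → Type*} {G : SimpleGraph V}
    {H : ∀ k, SimpleGraph (W k)} {f : ∀ k, W k ↪ V} {c : ℝ≥0∞}
    (hle : ∀ k, (H k).map (f k) ≤ G) (hdisj : Pairwise (Disjoint on fun k => (H k).map (f k)))
    (hH : ∀ k, c ≤ cheeger (H k)) (A : Finset V) :
    c * (↑A ∩ ⋃ k, range (f k)).encard ≤ (inwardEdges G A).encard := by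
  classical
  obtain ⟨T, hT, hsub⟩ :=
    Set.finite_subset_iUnion (A.finite_toSet.inter_of_left _)
      (inter_subset_right (t := ⋃ k, range (f k)))
  lift T to Finset κ using hT
  set E := fun k => inwardEdges ((H k).map (f k)) A
  calc c * ((A : Set V) ∩ ⋃ k, range (f k)).encard
      ≤ c * ((⋃ k ∈ T, ((A : Set V) ∩ range (f k))).encard : ℕ∞) := by
        refine mul_le_mul_right (ENat.toENNReal_le.2 (encard_le_encard fun x hx => ?_)) c
        obtain ⟨k, hk, hxk⟩ := mem_iUnion₂.1 (hsub hx)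
        exact mem_biUnion hk ⟨hx.1, hxk⟩
    _ ≤ c * ∑ k ∈ T, (((A : Set V) ∩ range (f k)).encard : ℝ≥0∞) := by
        rw [← toENNReal_sum]
        exact mul_le_mul_right (ENat.toENNReal_le.2 (T.set_encard_biUnion_le _)) c
    _ ≤ ∑ k ∈ T, ((E k).encard : ℝ≥0∞) := by
        rw [Finset.mul_sum]
        exact Finset.sum_le_sum fun k _ => mul_encard_inter_range_le (hH k) A
    _ = ((⋃ k ∈ T, E k).encard : ℝ≥0∞) := by
        rw [← toENNReal_sum, ← Finset.set_biUnion_coe, T.finite_toSet.encard_biUnion,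
          finsum_mem_coe_finset]
        exact fun k _ l _ hkl => disjoint_inwardEdges (hdisj hkl) A
    _ ≤ (inwardEdges G A).encard :=
        ENat.toENNReal_le.2 (encard_le_encard (iUnion₂_subset fun k _ =>
          inwardEdges_mono (hle k) A))

def cthickening (G : SimpleGraph V) (n : ℕ) (C : Set V) : Set V :=
  {v | ∃ a ∈ C, ∃ p : G.Walk v a, p.length ≤ n}

section cthickening

variable {G : SimpleGraph V}

lemma cthickening_mono {m n : ℕ} {C D : Set V} (hmn : m ≤ n) (hCD : C ⊆ D) :
    cthickening G m C ⊆ cthickening G n D :=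
  fun _ ⟨a, ha, p, hp⟩ => ⟨a, hCD ha, p, hp.trans hmn⟩

lemma cthickening_zero_subset (C : Set V) : cthickening G 0 C ⊆ C := by
  rintro v ⟨a, ha, p, hp⟩
  rwa [SimpleGraph.Walk.eq_of_length_eq_zero (Nat.le_zero.1 hp)]

lemma cthickening_succ_subset (n : ℕ) (C : Set V) :
    cthickening G (n + 1) C ⊆ C ∪ ⋃ u ∈ cthickening G n C, G.neighborSet u := by
  rintro v ⟨a, ha, p, hp⟩
  cases p with
  | nil => exact Or.inl ha
  | cons hadj q =>
    rw [SimpleGraph.Walk.length_cons] at hp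
    exact Or.inr (mem_biUnion ⟨a, ha, q, by omega⟩ hadj.symm)

lemma mem_cthickening_vboundary {A : Set V} {a v : V} (p : G.Walk a v) (ha : a ∈ A)
    (hv : v ∉ A) : a ∈ cthickening G p.length (vboundary G A) := by
  induction p with
  | nil => exact absurd ha hv
  | @cons a x v hadj q ih =>
    by_cases hx : x ∈ A
    · obtain ⟨b, hb, q', hq'⟩ := ih hx hv
      exact ⟨b, hb, .cons hadj q', by simp only [SimpleGraph.Walk.length_cons]; omega⟩
    · exact ⟨x, ⟨hx, a, ha, hadj.symm⟩, .cons hadj .nil, by simp⟩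

lemma encard_cthickening_le {μ : ℕ} (hμ : ∀ x : V, (G.neighborSet x).encard ≤ μ)
    (n : ℕ) (C : Set V) :
    (cthickening G n C).encard ≤ (∑ i ∈ Finset.range (n + 1), μ ^ i : ℕ) * C.encard := by
  induction n with
  | zero => simpa using encard_le_encard (cthickening_zero_subset C)
  | succ n ih =>
    calc (cthickening G (n + 1) C).encard
        ≤ C.encard + μ * (cthickening G n C).encard :=
          (encard_le_encard (cthickening_succ_subset n C)).trans <| (encard_union_le _ _).trans <|
            add_le_add_right (encard_biUnion_le_mul fun u _ => hμ u) _
      _ ≤ C.encard + μ * ((∑ i ∈ Finset.range (n + 1), μ ^ i : ℕ) * C.encard) := by gcongr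
      _ = (∑ i ∈ Finset.range (n + 1 + 1), μ ^ i : ℕ) * C.encard := by
          rw [geom_sum_succ (n := n + 1)]
          push_cast
          ring

end cthickening

lemma pairwise_disjoint_sigma {α σ : Type*} [PartialOrder α] [OrderBot α] {κ : σ → Type*}
    {G : σ → α} {K : ∀ s, κ s → α} (hG : Pairwise (Disjoint on G))
    (hK : ∀ s, Pairwise (Disjoint on K s)) (hle : ∀ s c, K s c ≤ G s) :
    Pairwise (Disjoint on fun k : Σ s, κ s => K k.1 k.2) := by
  rintro ⟨s, c⟩ ⟨t, d⟩ hne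
  by_cases hst : s = t
  · subst hst
    exact hK s fun hcd => hne (congrArg (Sigma.mk s) hcd)
  · exact (hG hst).mono (hle s c) (hle t d)

section components

variable {W : Type*} (H : SimpleGraph W) (e : W ↪ V)

lemma map_induce_supp_le (c : H.ConnectedComponent) :
    (H.induce c.supp).map ((Embedding.subtype _).trans e) ≤ H.map e := by
  intro u v huv
  obtain ⟨a, b, hab, rfl, rfl⟩ := (SimpleGraph.map_adj _ _ _ _).1 huv
  exact SimpleGraph.map_adj_apply.2 hab

lemma pairwise_disjoint_map_induce_supp :
    Pairwise (Disjoint on fun c : H.ConnectedComponent =>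
      (H.induce c.supp).map ((Embedding.subtype _).trans e)) := by
  intro c d hcd
  refine SimpleGraph.disjoint_left.2 fun u v huv huv' => hcd ?_
  obtain ⟨a, b, -, rfl, -⟩ := (SimpleGraph.map_adj _ _ _ _).1 huv
  obtain ⟨a', b', -, ha', -⟩ := (SimpleGraph.map_adj _ _ _ _).1 huv'
  have : (a' : W) = a := e.injective ha'
  rw [← a.2, ← a'.2, this]

lemma iUnion_range_subtype_supp_trans :
    ⋃ c : H.ConnectedComponent, range ((Embedding.subtype (· ∈ c.supp)).trans e) = range e := by
  refine (iUnion_subset fun c => ?_).antisymm fun _ ⟨w, hw⟩ => ?_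
  · rintro _ ⟨a, rfl⟩
    exact ⟨a, rfl⟩
  · exact mem_iUnion.2 ⟨H.connectedComponentMk w, ⟨w, rfl⟩, hw⟩

end components

section decomposition

variable {G : SimpleGraph V} {Γ : ι → G.Subgraph} {c : ℝ≥0∞}

lemma pairwise_disjoint_spanningCoe
    (hint : ∀ s t : ι, s ≠ t → ∀ x y : V, ¬(Γ s ⊓ Γ t).Adj x y) :
    Pairwise (Disjoint on fun s => (Γ s).spanningCoe) :=
  fun s t hst => SimpleGraph.disjoint_left.2 fun x y hs ht => hint s t hst x y ⟨hs, ht⟩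

lemma mul_encard_inter_iUnion_verts_le
    (hdisj : Pairwise (Disjoint on fun s => (Γ s).spanningCoe))
    (hΓ : ∀ s, c ≤ cheeger (Γ s).coe) (A : Finset V) :
    c * (↑A ∩ ⋃ s, (Γ s).verts).encard ≤ (inwardEdges G A).encard := by
  have hmap : ∀ s, (Γ s).coe.map (Embedding.subtype _) = (Γ s).spanningCoe :=
    fun s => (Γ s).spanningCoe_coe
  simpa using mul_encard_inter_iUnion_range_le (H := fun s => (Γ s).coe)
    (f := fun s => Embedding.subtype _) (fun s => (hmap s).trans_le (Γ s).spanningCoe_le)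
    (by simpa only [hmap] using hdisj) hΓ A

variable {S₁ S₂ : Set ι} {R μ : ℕ}

lemma mul_encard_inter_iUnion_diff_Ws_le
    (hdisj : Pairwise (Disjoint on fun s => (Γ s).spanningCoe))
    (hrest : ∀ s ∈ S₂, ∀ C : (rest G Γ S₁ R s).ConnectedComponent,
      c ≤ cheeger ((rest G Γ S₁ R s).induce C.supp))
    (A : Finset V) :
    c * (↑A ∩ ⋃ s ∈ S₂, ((Γ s).verts \ Ws G Γ S₁ R s)).encard ≤ (inwardEdges G A).encard := by
  let e s : {u : (Γ s).verts // (u : V) ∉ Ws G Γ S₁ R s} ↪ V :=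
    (Embedding.subtype _).trans (Embedding.subtype _)
  have hle s : (rest G Γ S₁ R s).map (e s) ≤ (Γ s).spanningCoe := by
    intro u v huv
    obtain ⟨a, b, hab, rfl, rfl⟩ := (SimpleGraph.map_adj _ _ _ _).1 huv
    exact hab
  have hrange s : range (e s) = (Γ s).verts \ Ws G Γ S₁ R s := by
    ext v
    simp [e, and_comm]
  have key := mul_encard_inter_iUnion_range_le
    (κ := Σ s : S₂, (rest G Γ S₁ R s).ConnectedComponent)
    (H := fun k => (rest G Γ S₁ R k.1).induce k.2.supp)
    (f := fun k => (Embedding.subtype _).trans (e k.1))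
    (fun k => (map_induce_supp_le _ _ k.2).trans ((hle k.1).trans (Γ k.1).spanningCoe_le))
    (pairwise_disjoint_sigma (G := fun s : S₂ => (Γ s).spanningCoe)
      (fun s t hst => hdisj (Subtype.val_injective.ne hst))
      (fun s => pairwise_disjoint_map_induce_supp _ (e s))
      (fun s C => (map_induce_supp_le _ _ C).trans (hle s)))
    (fun k => hrest k.1 k.1.2 k.2) A
  convert key using 4
  simp only [iUnion_sigma, iUnion_range_subtype_supp_trans, hrange, biUnion_eq_iUnion]

lemma inter_iUnion_Ws_subset_cthickening (A : Set V) :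
    A ∩ ⋃ s, Ws G Γ S₁ R s ⊆ cthickening G R (vboundary G A ∪ (A ∩ ⋃ t ∈ S₁, (Γ t).verts)) := by
  rintro a ⟨ha, haW⟩
  obtain ⟨s, hu, w, hw, hreach, hdist⟩ := mem_iUnion.1 haW
  obtain ⟨p, hp⟩ := hreach.exists_walk_length_eq_dist
  have hq : (p.map (Γ s).hom).length ≤ R := by rw [SimpleGraph.Walk.length_map, hp]; exact hdist
  by_cases hwA : (w : V) ∈ A
  · exact ⟨w, Or.inr ⟨hwA, hw.2⟩, _, hq⟩
  · exact cthickening_mono hq subset_union_left (mem_cthickening_vboundary _ ha hwA)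

lemma iUnion_verts_union_iUnion_Ws_eq_univ (hcover : (⨆ s, Γ s) = ⊤) (hpart : S₁ ∪ S₂ = univ) :
    (⋃ t ∈ S₁, (Γ t).verts) ∪ (⋃ s ∈ S₂, ((Γ s).verts \ Ws G Γ S₁ R s)) ∪
      ⋃ s, Ws G Γ S₁ R s = univ := by
  refine eq_univ_of_forall fun v => ?_
  have hv : v ∈ ⋃ s, (Γ s).verts := by
    rw [← SimpleGraph.Subgraph.verts_iSup, hcover]
    trivial
  obtain ⟨s, hs⟩ := mem_iUnion.1 hv
  rcases (show s ∈ S₁ ∪ S₂ by rw [hpart]; trivial) with h₁ | h₂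
  · exact Or.inl (Or.inl (mem_biUnion h₁ hs))
  · by_cases hW : v ∈ Ws G Γ S₁ R s
    · exact Or.inr (mem_iUnion.2 ⟨s, hW⟩)
    · exact Or.inl (Or.inr (mem_biUnion h₂ ⟨hs, hW⟩))

theorem mul_card_le_of_decomposition (hμ : ∀ x : V, (G.neighborSet x).encard ≤ μ)
    (hcover : (⨆ s, Γ s) = ⊤) (hdisj : Pairwise (Disjoint on fun s => (Γ s).spanningCoe))
    (hpart : S₁ ∪ S₂ = univ) (hS₁ : ∀ s ∈ S₁, c ≤ cheeger (Γ s).coe)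
    (hS₂ : ∀ s ∈ S₂, ∀ C : (rest G Γ S₁ R s).ConnectedComponent,
      c ≤ cheeger ((rest G Γ S₁ R s).induce C.supp))
    (A : Finset V) :
    c * A.card ≤ (2 * μ + (∑ i ∈ Finset.range (R + 1), μ ^ i : ℕ) * (c + μ)) *
      (vboundary G A).encard := by
  set β : ℕ := ∑ i ∈ Finset.range (R + 1), μ ^ i
  set U := ⋃ t ∈ S₁, (Γ t).verts
  set b := ENat.toENNReal (vboundary G A).encard
  set x₁ := ENat.toENNReal ((A : Set V) ∩ U).encard
  set x₂ := ENat.toENNReal ((A : Set V) ∩ ⋃ s ∈ S₂, ((Γ s).verts \ Ws G Γ S₁ R s)).encard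
  set x₃ := ENat.toENNReal ((A : Set V) ∩ ⋃ s, Ws G Γ S₁ R s).encard
  have hE : ((inwardEdges G A).encard : ℝ≥0∞) ≤ μ * b := by
    simpa using ENat.toENNReal_le.2 (encard_inwardEdges_le hμ A)
  have h₁ : c * x₁ ≤ μ * b := by
    have key := mul_encard_inter_iUnion_verts_le (Γ := fun t : S₁ => Γ t)
      (fun s t hst => hdisj (Subtype.val_injective.ne hst)) (fun t => hS₁ t t.2) A
    rw [iUnion_subtype] at key
    exact key.trans hE
  have h₂ : c * x₂ ≤ μ * b := (mul_encard_inter_iUnion_diff_Ws_le hdisj hS₂ A).trans hE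
  have h₃ : x₃ ≤ β * (b + x₁) := by
    have : ((A : Set V) ∩ ⋃ s, Ws G Γ S₁ R s).encard ≤
        β * ((vboundary G A).encard + ((A : Set V) ∩ U).encard) :=
      (encard_le_encard (inter_iUnion_Ws_subset_cthickening A)).trans
        ((encard_cthickening_le hμ R _).trans (mul_le_mul_right (encard_union_le _ _) _))
    simpa using ENat.toENNReal_le.2 this
  have hA : (A.card : ℝ≥0∞) ≤ x₁ + x₂ + x₃ := by
    have hsub : (A : Set V) ⊆ (A ∩ U) ∪ (A ∩ ⋃ s ∈ S₂, ((Γ s).verts \ Ws G Γ S₁ R s)) ∪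
        (A ∩ ⋃ s, Ws G Γ S₁ R s) := by
      rw [← inter_union_distrib_left, ← inter_union_distrib_left,
        iUnion_verts_union_iUnion_Ws_eq_univ hcover hpart, inter_univ]
    have := (encard_le_encard hsub).trans
      ((encard_union_le _ _).trans (add_le_add_left (encard_union_le _ _) _))
    simpa using ENat.toENNReal_le.2 this
  calc c * A.card ≤ c * (x₁ + x₂ + x₃) := by gcongr
    _ = c * x₁ + c * x₂ + c * x₃ := by ring
    _ ≤ μ * b + μ * b + c * (β * (b + x₁)) := by gcongr
    _ = μ * b + μ * b + β * c * b + β * (c * x₁) := by ring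
    _ ≤ μ * b + μ * b + β * c * b + β * (μ * b) := by gcongr
    _ = (2 * μ + β * (c + μ)) * b := by ring

theorem div_le_cheeger_of_decomposition (hμ : ∀ x : V, (G.neighborSet x).encard ≤ μ)
    (hcover : (⨆ s, Γ s) = ⊤) (hdisj : Pairwise (Disjoint on fun s => (Γ s).spanningCoe))
    (hpart : S₁ ∪ S₂ = univ) (hS₁ : ∀ s ∈ S₁, c ≤ cheeger (Γ s).coe)
    (hS₂ : ∀ s ∈ S₂, ∀ C : (rest G Γ S₁ R s).ConnectedComponent,
      c ≤ cheeger ((rest G Γ S₁ R s).induce C.supp)) :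
    c / (2 * μ + (∑ i ∈ Finset.range (R + 1), μ ^ i : ℕ) * (c + μ)) ≤ cheeger G := by
  refine (le_cheeger_iff G _).2 fun A => ?_
  rw [← ENNReal.mul_div_right_comm]
  exact ENNReal.div_le_of_le_mul <|
    (mul_card_le_of_decomposition hμ hcover hdisj hpart hS₁ hS₂ A).trans_eq (mul_comm _ _)

end decomposition

lemma div_le_div_geom_sum {μ r : ℝ} (hμ : 0 ≤ μ) (hr : 0 < r) (R : ℕ) :
    r ^ 2 * (μ - 1) / ((μ ^ (R + 1) - 1) * (μ + r) ^ 2 + 2 * r * μ * (μ - 1)) ≤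
      r / (2 * μ + (∑ i ∈ Finset.range (R + 1), μ ^ i) * (r + μ)) := by
  set β := ∑ i ∈ Finset.range (R + 1), μ ^ i
  have hβ : 1 ≤ β := by
    simpa using Finset.single_le_sum (f := fun i => μ ^ i) (fun i _ => by positivity)
      (Finset.mem_range.2 R.succ_pos)
  have hQ : 0 < 2 * μ + β * (r + μ) := by positivity
  rcases eq_or_ne μ 1 with rfl | hμ1
  · simp only [sub_self, mul_zero, zero_div]
    positivity
  have hP : 0 < β * (μ + r) ^ 2 + 2 * r * μ := by positivity
  rw [← geom_sum_mul, show β * (μ - 1) * (μ + r) ^ 2 + 2 * r * μ * (μ - 1) =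
      (β * (μ + r) ^ 2 + 2 * r * μ) * (μ - 1) by ring,
    mul_div_mul_right _ _ (sub_ne_zero.2 hμ1), div_le_div_iff₀ hP hQ]
  nlinarith [mul_nonneg (mul_nonneg (zero_le_one.trans hβ) hμ) (add_pos_of_nonneg_of_pos hμ hr).le]

theorem cheeger_ge_of_decomposition (G : SimpleGraph V)
    (μ : ℕ) (hμ : ∀ x : V, (G.neighborSet x).encard ≤ μ)
    (R : ℕ) (r : ℝ) (hr : 0 < r)
    (Γ : ι → G.Subgraph)
    -- (1) the subgraphs cover Γ
    (hcover : (⨆ s, Γ s) = ⊤)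
    -- (2) pairwise intersections are (possibly empty) sets of vertices, and
    -- `Γ_s ∖ Γ_t ≠ ∅` for `s ≠ t`
    (hint : ∀ s t : ι, s ≠ t → (∀ x y : V, ¬(Γ s ⊓ Γ t).Adj x y) ∧ ¬Γ s ≤ Γ t)
    -- (3) a partition {S₁, S₂} of the index set
    (S₁ S₂ : Set ι) (hpart : S₁ ∪ S₂ = Set.univ)
    -- (3.1)
    (h31 : ∀ s ∈ S₁, ENNReal.ofReal r ≤ cheeger (Γ s).coe)
    -- (3.2)
    (h32 : ∀ s ∈ S₂, (Vs G Γ S₁ s).Nonempty ∧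
      ∀ c : (rest G Γ S₁ R s).ConnectedComponent,
        ENNReal.ofReal r ≤ cheeger ((rest G Γ S₁ R s).induce c.supp)) :
    ENNReal.ofReal (r ^ 2 * ((μ : ℝ) - 1) /
        (((μ : ℝ) ^ (R + 1) - 1) * ((μ : ℝ) + r) ^ 2 + 2 * r * (μ : ℝ) * ((μ : ℝ) - 1))) ≤
      cheeger G := by
  set β : ℕ := ∑ i ∈ Finset.range (R + 1), μ ^ i
  have hβ : 0 < β := Finset.sum_pos' (fun i _ => Nat.zero_le _) ⟨0, by simp, by simp⟩
  have hD : 0 < 2 * (μ : ℝ) + β * (r + μ) := by positivity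
  calc ENNReal.ofReal (r ^ 2 * ((μ : ℝ) - 1) /
        (((μ : ℝ) ^ (R + 1) - 1) * ((μ : ℝ) + r) ^ 2 + 2 * r * (μ : ℝ) * ((μ : ℝ) - 1)))
      ≤ ENNReal.ofReal (r / (2 * μ + β * (r + μ))) := by
        refine ENNReal.ofReal_le_ofReal ?_
        simpa [β] using div_le_div_geom_sum (Nat.cast_nonneg μ) hr R
    _ = ENNReal.ofReal r / (2 * μ + β * (ENNReal.ofReal r + μ)) := by
        rw [ENNReal.ofReal_div_of_pos hD, ENNReal.ofReal_add (by positivity) (by positivity),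
          ENNReal.ofReal_mul (by positivity), ENNReal.ofReal_mul (by positivity),
          ENNReal.ofReal_add hr.le (by positivity)]
        simp
    _ ≤ cheeger G := div_le_cheeger_of_decomposition hμ hcover
        (pairwise_disjoint_spanningCoe fun s t hst => (hint s t hst).1) hpart h31
        fun s hs => (h32 s hs).2

end TreePaper
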